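/- Let j₁, j₂ ∈ L²(Ω;ℝ²) with ⟨j₁⟩ = (1,0)ᵀ and ⟨j₂⟩ = (0,1)ᵀ, let A = (a_{ij}) with a_{ij} = ⟨σ⁻¹ jᵢ·jⱼ⟩ and b = ⟨j₁·R⊥j₂⟩. Let L(x) := [[σ(x)⁻¹I₂, σ₁⁻¹R⊥],[−σ₁⁻¹R⊥, σ(x)⁻¹I₂]], g := f₁σ₁(σ₁−σ₂)/(σ₁+σ₂) + 2σ₁σ₂/(σ₁+σ₂), and M_∞ := (1/g)[[I₂,R⊥],[−R⊥,I₂]]. For K = (k₁,k₂,k₃,k₄) ∈ ℝ⁴ define J_K := (k₁j₁+k₂j₂, k₃j₁+k₄j₂) ∈ L²(Ω;ℝ⁴). If for every K with |K| = 1 the function x ↦ L(x)J_K(x) − M_∞⟨J_K⟩ is not almost everywhere zero on Ω, then det A − b²/σ₁² > 0 and the strict inequality f₁ > ((σ₁+σ₂)/(σ₁(σ₁−σ₂)))·[(Tr A − 2b/σ₁)/(det A − b²/σ₁²) − 2σ₁σ₂/(σ₁+σ₂)] holds; i.e., the translation lower bound on the volume fraction is not attained. -/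

import Mathlib

/-!
Fix a unit vector `K` and write `L(x) = [[σ⁻¹ I₂, σ₁⁻¹ R⊥], [-σ₁⁻¹ R⊥, σ⁻¹ I₂]]`. The vector
`w = M_∞ K` is an eigenvector of every `L(x)`, with eigenvalue `σ(x)⁻¹ + σ₁⁻¹`, so the field
`c w` with `c = (σ⁻¹ + σ₁⁻¹)⁻¹` satisfies `L (c w) = M_∞ K`; for the two-phase medium
`2 ⟨c⟩ = g`. As `σ ≤ σ₁`, each `L(x)` is positive semidefinite, hence the defect
`F = (J_K - c w) · L (J_K - c w)` is nonnegative and vanishes exactly where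
`L J_K = M_∞ ⟨J_K⟩ = M_∞ K`. Expanding, `⟨F⟩ = K · (𝔸 - M_∞) K` where
`𝔸 = [[A, (b/σ₁) R⊥], [-(b/σ₁) R⊥, A]]`, so the hypothesis makes `𝔸 - M_∞` positive definite.
Since `𝔸 - M_∞` has the same block shape, with `A - g⁻¹ I₂` and `b/σ₁ - g⁻¹`, positivity of its
principal minors gives `det A - b²/σ₁² > g⁻¹ (tr A - 2b/σ₁) > 0`, and solving `g` for `f₁` turns
this into the claimed strict inequality.
-/

open MeasureTheory Matrix

noncomputable section

def Rperp : Matrix (Fin 2) (Fin 2) ℝ := !![0, 1; -1, 0]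

def avg (Ω : Set (Fin 2 → ℝ)) (h : (Fin 2 → ℝ) → ℝ) : ℝ :=
  ((volume Ω).toReal)⁻¹ * ∫ x in Ω, h x

/-- The 4×4 block matrix `[[I₂, R⊥], [-R⊥, I₂]]`. -/
def blockIRperp : Matrix (Fin 4) (Fin 4) ℝ :=
  !![1, 0, 0, 1;
     0, 1, -1, 0;
     0, -1, 1, 0;
     1, 0, 0, 1]

/-- The block matrix `[[A, t R⊥], [-t R⊥, A]]`: the tensor `L(x)` of the paper is
`translatedTensor (σ(x)⁻¹ • 1) σ₁⁻¹`, and `blockIRperp = translatedTensor 1 1`. -/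
def translatedTensor (A : Matrix (Fin 2) (Fin 2) ℝ) (t : ℝ) : Matrix (Fin 4) (Fin 4) ℝ :=
  !![A 0 0, A 0 1, 0, t;
     A 1 0, A 1 1, -t, 0;
     0, -t, A 0 0, A 0 1;
     t, 0, A 1 0, A 1 1]

def pairCombination (u v : Fin 2 → ℝ) (K : Fin 4 → ℝ) : Fin 4 → ℝ :=
  ![K 0 * u 0 + K 1 * v 0, K 0 * u 1 + K 1 * v 1, K 2 * u 0 + K 3 * v 0, K 2 * u 1 + K 3 * v 1]

def pairGram (u v : Fin 2 → ℝ) : Matrix (Fin 2) (Fin 2) ℝ :=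
  !![u ⬝ᵥ u, u ⬝ᵥ v; v ⬝ᵥ u, v ⬝ᵥ v]

theorem blockIRperp_eq_transpose_mul_self :
    blockIRperp = (!![1, 0, 0, 1; 0, 1, -1, 0] : Matrix (Fin 2) (Fin 4) ℝ)ᵀ *
      (!![1, 0, 0, 1; 0, 1, -1, 0] : Matrix (Fin 2) (Fin 4) ℝ) := by
  ext i j; fin_cases i <;> fin_cases j <;> simp [blockIRperp, Matrix.mul_apply, Fin.sum_univ_two]

theorem blockIRperp_transpose : blockIRperpᵀ = blockIRperp := by
  rw [blockIRperp_eq_transpose_mul_self, transpose_mul, transpose_transpose]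

theorem blockIRperp_mul_self : blockIRperp * blockIRperp = (2 : ℝ) • blockIRperp := by
  ext i j; fin_cases i <;> fin_cases j <;>
    simp [blockIRperp, Matrix.mul_apply, Fin.sum_univ_four] <;> norm_num

theorem posSemidef_blockIRperp : blockIRperp.PosSemidef := by
  rw [blockIRperp_eq_transpose_mul_self, ← conjTranspose_eq_transpose_of_trivial]
  exact posSemidef_conjTranspose_mul_self _

theorem blockIRperp_mulVec_dotProduct_self (K : Fin 4 → ℝ) :
    blockIRperp *ᵥ K ⬝ᵥ blockIRperp *ᵥ K = 2 * (K ⬝ᵥ blockIRperp *ᵥ K) := by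
  rw [dotProduct_comm, dotProduct_mulVec, ← mulVec_transpose, blockIRperp_transpose,
    mulVec_mulVec, blockIRperp_mul_self, smul_mulVec, smul_dotProduct, smul_eq_mul,
    dotProduct_comm]

theorem translatedTensor_smul_one (s t : ℝ) :
    translatedTensor (s • 1) t = !![s, 0, 0, t; 0, s, -t, 0; 0, -t, s, 0; t, 0, 0, s] := by
  ext i j; fin_cases i <;> fin_cases j <;> simp [translatedTensor]

theorem translatedTensor_smul_one_eq_add (s t : ℝ) :
    translatedTensor (s • 1) t = (s - t) • (1 : Matrix (Fin 4) (Fin 4) ℝ) + t • blockIRperp := by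
  ext i j; fin_cases i <;> fin_cases j <;> simp [translatedTensor, blockIRperp, one_apply]

theorem translatedTensor_smul_one_transpose (s t : ℝ) :
    (translatedTensor (s • 1) t)ᵀ = translatedTensor (s • 1) t := by
  rw [translatedTensor_smul_one_eq_add, transpose_add, transpose_smul, transpose_smul,
    transpose_one, blockIRperp_transpose]

theorem posSemidef_translatedTensor {s t : ℝ} (ht : 0 ≤ t) (hts : t ≤ s) :
    (translatedTensor (s • 1) t).PosSemidef := by
  rw [translatedTensor_smul_one_eq_add]
  exact (PosSemidef.one.smul (sub_nonneg.mpr hts)).add (posSemidef_blockIRperp.smul ht)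

theorem translatedTensor_mulVec_smul_blockIRperp_mulVec (s t γ : ℝ) (K : Fin 4 → ℝ) :
    translatedTensor (s • 1) t *ᵥ (γ • blockIRperp *ᵥ K) = (s + t) • γ • blockIRperp *ᵥ K := by
  rw [translatedTensor_smul_one_eq_add, add_mulVec, smul_mulVec, smul_mulVec, one_mulVec,
    mulVec_smul, mulVec_mulVec, blockIRperp_mul_self, smul_mulVec]
  module

theorem dotProduct_mulVec_sub_smul {n : Type*} [Fintype n] {M : Matrix n n ℝ} (hM : Mᵀ = M)
    {w : n → ℝ} {l c : ℝ} (hw : M *ᵥ w = l • w) (hc : c * l = 1) (v : n → ℝ) :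
    (v - c • w) ⬝ᵥ M *ᵥ (v - c • w) = v ⬝ᵥ M *ᵥ v - 2 * (w ⬝ᵥ v) + c * (w ⬝ᵥ w) := by
  have hwM : w ⬝ᵥ M *ᵥ v = l * (w ⬝ᵥ v) := by
    rw [dotProduct_mulVec, ← mulVec_transpose, hM, hw, smul_dotProduct, smul_eq_mul]
  simp only [mulVec_sub, mulVec_smul, hw, sub_dotProduct, dotProduct_sub, smul_dotProduct,
    dotProduct_smul, smul_eq_mul, hwM, dotProduct_comm v w]
  linear_combination (c * (w ⬝ᵥ w) - 2 * (w ⬝ᵥ v)) * hc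

theorem pairCombination_dotProduct_translatedTensor (s t : ℝ) (u v : Fin 2 → ℝ)
    (K : Fin 4 → ℝ) :
    pairCombination u v K ⬝ᵥ translatedTensor (s • 1) t *ᵥ pairCombination u v K =
      K ⬝ᵥ translatedTensor (s • pairGram u v) (t * (u ⬝ᵥ Rperp *ᵥ v)) *ᵥ K := by
  simp [pairCombination, translatedTensor, pairGram, Rperp, dotProduct, mulVec, Fin.sum_univ_four,
    Fin.sum_univ_two, one_apply]
  ring

theorem pairCombination_basis (K : Fin 4 → ℝ) : pairCombination ![1, 0] ![0, 1] K = K := by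
  ext i; fin_cases i <;> simp [pairCombination]

/-- The defect `(J_K - c w) · L (J_K - c w)` at a point `x`, for `s = σ(x)⁻¹`, `t = σ₁⁻¹`,
`u = j₁ x`, `v = j₂ x` and `γ = g⁻¹`. -/
def attainabilityDefect (s t γ : ℝ) (u v : Fin 2 → ℝ) (K : Fin 4 → ℝ) : ℝ :=
  let J := pairCombination u v K
  let w := γ • blockIRperp *ᵥ K
  (J - (s + t)⁻¹ • w) ⬝ᵥ translatedTensor (s • 1) t *ᵥ (J - (s + t)⁻¹ • w)

section AttainabilityDefect

variable {s t γ : ℝ} {u v : Fin 2 → ℝ} {K : Fin 4 → ℝ}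

theorem attainabilityDefect_nonneg (ht : 0 ≤ t) (hts : t ≤ s) :
    0 ≤ attainabilityDefect s t γ u v K := by
  have := (posSemidef_translatedTensor ht hts).dotProduct_mulVec_nonneg
    (pairCombination u v K - (s + t)⁻¹ • γ • blockIRperp *ᵥ K)
  rwa [star_trivial] at this

theorem translatedTensor_mulVec_of_attainabilityDefect_eq_zero (ht : 0 < t) (hts : t ≤ s)
    (h : attainabilityDefect s t γ u v K = 0) :
    translatedTensor (s • 1) t *ᵥ pairCombination u v K = γ • blockIRperp *ᵥ K := by
  have hker := ((posSemidef_translatedTensor ht.le hts).dotProduct_mulVec_zero_iff _).mp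
    (by rw [star_trivial]; exact h)
  rwa [mulVec_sub, mulVec_smul, translatedTensor_mulVec_smul_blockIRperp_mulVec, smul_smul,
    inv_mul_cancel₀ (by linarith), one_smul, sub_eq_zero] at hker

end AttainabilityDefect

theorem attainabilityDefect_eq {s t : ℝ} (γ : ℝ) (u v : Fin 2 → ℝ) (K : Fin 4 → ℝ)
    (hst : s + t ≠ 0) :
    attainabilityDefect s t γ u v K =
      K ⬝ᵥ translatedTensor (s • pairGram u v) (t * (u ⬝ᵥ Rperp *ᵥ v)) *ᵥ K -
        2 * γ * (blockIRperp *ᵥ K ⬝ᵥ pairCombination u v K) +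
        2 * γ ^ 2 * (s + t)⁻¹ * (K ⬝ᵥ blockIRperp *ᵥ K) := by
  rw [attainabilityDefect, dotProduct_mulVec_sub_smul (translatedTensor_smul_one_transpose s t)
    (translatedTensor_mulVec_smul_blockIRperp_mulVec s t γ K) (inv_mul_cancel₀ hst),
    pairCombination_dotProduct_translatedTensor]
  simp only [smul_dotProduct, dotProduct_smul, blockIRperp_mulVec_dotProduct_self, smul_eq_mul]
  ring

theorem translatedTensor_sub_smul_blockIRperp (A : Matrix (Fin 2) (Fin 2) ℝ) (β γ : ℝ) :
    translatedTensor A β - γ • blockIRperp = translatedTensor (A - γ • 1) (β - γ) := by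
  ext i j; fin_cases i <;> fin_cases j <;> simp [translatedTensor, blockIRperp] <;> ring

theorem dotProduct_translatedTensor_mulVec (A : Matrix (Fin 2) (Fin 2) ℝ) (t : ℝ)
    (K : Fin 4 → ℝ) :
    K ⬝ᵥ translatedTensor A t *ᵥ K = A 0 0 * (K 0 ^ 2 + K 2 ^ 2) + A 1 1 * (K 1 ^ 2 + K 3 ^ 2) +
      (A 0 1 + A 1 0) * (K 0 * K 1 + K 2 * K 3) + 2 * t * (K 0 * K 3 - K 1 * K 2) := by
  simp [translatedTensor, dotProduct, mulVec, Fin.sum_univ_four]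
  ring

section PositiveForm

variable {A : Matrix (Fin 2) (Fin 2) ℝ} {t : ℝ}

theorem trace_sub_pos_of_translatedTensor_pos
    (hpos : ∀ K ≠ 0, 0 < K ⬝ᵥ translatedTensor A t *ᵥ K) : 0 < A.trace - 2 * t := by
  have h := hpos ![1, 0, 0, -1] (by simp)
  rw [dotProduct_translatedTensor_mulVec] at h
  simp [trace_fin_two] at h ⊢
  linarith

theorem det_sub_sq_pos_of_translatedTensor_pos (hA : A 1 0 = A 0 1)
    (hpos : ∀ K ≠ 0, 0 < K ⬝ᵥ translatedTensor A t *ᵥ K) : 0 < A.det - t ^ 2 := by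
  have h₀ := hpos ![1, 0, 0, 0] (by simp)
  rw [dotProduct_translatedTensor_mulVec] at h₀
  simp at h₀
  -- for `K 1 = A 0 0` and `K 3 = 0` this `K` minimises the form, with value `A 0 0 * (det - t²)`
  have h₁ := hpos ![-A 0 1, A 0 0, t, 0] (by simp [h₀.ne'])
  rw [dotProduct_translatedTensor_mulVec, hA] at h₁
  simp at h₁
  rw [det_fin_two, hA]
  nlinarith

theorem translation_bound_of_pos {γ : ℝ} (hA : A 1 0 = A 0 1) (hγ : 0 < γ)
    (hpos : ∀ K ≠ 0, 0 < K ⬝ᵥ (translatedTensor A t - γ • blockIRperp) *ᵥ K) :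
    0 < A.det - t ^ 2 ∧ (A.trace - 2 * t) / (A.det - t ^ 2) < γ⁻¹ := by
  rw [translatedTensor_sub_smul_blockIRperp] at hpos
  have hT := trace_sub_pos_of_translatedTensor_pos hpos
  have hD := det_sub_sq_pos_of_translatedTensor_pos (by simp [hA]) hpos
  have htr : (A - γ • 1).trace - 2 * (t - γ) = A.trace - 2 * t := by
    simp [trace_fin_two]; ring
  have hdet : (A - γ • 1).det - (t - γ) ^ 2 = A.det - t ^ 2 - γ * (A.trace - 2 * t) := by
    simp [trace_fin_two, det_fin_two, hA]; ring
  rw [htr] at hT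
  rw [hdet] at hD
  have hDpos : 0 < A.det - t ^ 2 := by nlinarith
  refine ⟨hDpos, ?_⟩
  rw [div_lt_iff₀ hDpos, lt_inv_mul_iff₀ hγ]
  linarith

end PositiveForm

theorem pos_of_pos_on_unit_sphere {n : Type*} [Fintype n] {M : Matrix n n ℝ}
    (h : ∀ K, K ⬝ᵥ K = 1 → 0 < K ⬝ᵥ M *ᵥ K) (K : n → ℝ) (hK : K ≠ 0) :
    0 < K ⬝ᵥ M *ᵥ K := by
  have hKK : 0 < K ⬝ᵥ K :=
    lt_of_le_of_ne (Finset.sum_nonneg fun i _ => mul_self_nonneg (K i))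
      (Ne.symm (dotProduct_self_eq_zero.not.mpr hK))
  set r := Real.sqrt (K ⬝ᵥ K)
  have hr : 0 < r := Real.sqrt_pos.mpr hKK
  have hr2 : r ^ 2 = K ⬝ᵥ K := Real.sq_sqrt hKK.le
  have hu := h (r⁻¹ • K) (by
    rw [smul_dotProduct, dotProduct_smul, smul_eq_mul, smul_eq_mul, ← hr2]; field_simp)
  rw [mulVec_smul, smul_dotProduct, dotProduct_smul, smul_eq_mul, smul_eq_mul, ← mul_assoc] at hu
  exact pos_of_mul_pos_right hu (by positivity)

section Integrability

variable {α : Type*} [MeasurableSpace α] {μ : Measure α}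

theorem MeasureTheory.MemLp.integrable_dotProduct {n : Type*} [Fintype n] {u v : α → n → ℝ}
    (hu : MemLp u 2 μ) (hv : MemLp v 2 μ) : Integrable (fun x => u x ⬝ᵥ v x) μ :=
  integrable_finsetSum _ fun i _ => (hu.eval i).integrable_mul (hv.eval i)

theorem MeasureTheory.MemLp.mulVec {n : Type*} [Fintype n] {p : ENNReal} {v : α → n → ℝ}
    (M : Matrix n n ℝ) (hv : MemLp v p μ) : MemLp (fun x => M *ᵥ v x) p μ :=
  (mulVecLin M).toContinuousLinearMap.comp_memLp' hv

theorem MeasureTheory.Integrable.const_dotProduct {n : Type*} [Fintype n] {f : α → n → ℝ}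
    (hf : ∀ i, Integrable (fun x => f x i) μ) (w : n → ℝ) : Integrable (fun x => w ⬝ᵥ f x) μ :=
  integrable_finsetSum _ fun i _ => (hf i).const_mul (w i)

theorem MeasureTheory.Integrable.dotProduct_mulVec {n : Type*} [Fintype n] {M : α → Matrix n n ℝ}
    (hM : ∀ i j, Integrable (fun x => M x i j) μ) (v w : n → ℝ) :
    Integrable (fun x => v ⬝ᵥ M x *ᵥ w) μ :=
  Integrable.const_dotProduct (fun i => integrable_finsetSum _ fun j _ => (hM i j).mul_const _) v

theorem MeasureTheory.Integrable.inv_mul_of_le {σ h : α → ℝ} {σ₂ : ℝ} (hσm : Measurable σ)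
    (hσ₂ : 0 < σ₂) (hσ : ∀ x, σ₂ ≤ σ x) (hh : Integrable h μ) :
    Integrable (fun x => (σ x)⁻¹ * h x) μ :=
  hh.bdd_mul (c := σ₂⁻¹) hσm.inv.aestronglyMeasurable <| .of_forall fun x => by
    rw [Real.norm_eq_abs, abs_inv, abs_of_pos (hσ₂.trans_le (hσ x))]
    exact inv_anti₀ hσ₂ (hσ x)

theorem MeasureTheory.Integrable.inv_add_inv [IsFiniteMeasure μ] {σ : α → ℝ} {σ₁ : ℝ}
    (hσm : Measurable σ) (hσ : ∀ x, 0 < σ x) (hσ₁ : 0 < σ₁) :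
    Integrable (fun x => ((σ x)⁻¹ + σ₁⁻¹)⁻¹) μ := by
  have hm : Measurable fun x => ((σ x)⁻¹ + σ₁⁻¹)⁻¹ := by fun_prop
  refine .of_bound hm.aestronglyMeasurable σ₁ (.of_forall fun x => ?_)
  have := hσ x
  rw [Real.norm_eq_abs, abs_of_pos (by positivity)]
  exact (inv_anti₀ (inv_pos.mpr hσ₁) (le_add_of_nonneg_left (inv_nonneg.mpr this.le))).trans_eq
    (inv_inv σ₁)

theorem integrable_translatedTensor_apply {A : α → Matrix (Fin 2) (Fin 2) ℝ} {t : α → ℝ}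
    (hA : ∀ i k, Integrable (fun x => A x i k) μ) (ht : Integrable t μ) (i k : Fin 4) :
    Integrable (fun x => translatedTensor (A x) (t x) i k) μ := by
  fin_cases i <;> fin_cases k <;> simp [translatedTensor, hA, ht]

theorem integrable_inv_smul_pairGram_apply {σ : α → ℝ} {σ₂ : ℝ} (hσm : Measurable σ)
    (hσ₂ : 0 < σ₂) (hσ₂le : ∀ x, σ₂ ≤ σ x) {j₁ j₂ : α → Fin 2 → ℝ} (hj₁ : MemLp j₁ 2 μ)
    (hj₂ : MemLp j₂ 2 μ) (i k : Fin 2) :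
    Integrable (fun x => ((σ x)⁻¹ • pairGram (j₁ x) (j₂ x)) i k) μ := by
  have hG {u v : α → Fin 2 → ℝ} (hu : MemLp u 2 μ) (hv : MemLp v 2 μ) :
      Integrable (fun x => (σ x)⁻¹ * (u x ⬝ᵥ v x)) μ :=
    (hu.integrable_dotProduct hv).inv_mul_of_le hσm hσ₂ hσ₂le
  fin_cases i <;> fin_cases k
  exacts [hG hj₁ hj₁, hG hj₁ hj₂, hG hj₂ hj₁, hG hj₂ hj₂]

theorem integrable_pairCombination_apply [IsFiniteMeasure μ] {j₁ j₂ : α → Fin 2 → ℝ}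
    (hj₁ : MemLp j₁ 2 μ) (hj₂ : MemLp j₂ 2 μ) (K : Fin 4 → ℝ) (i : Fin 4) :
    Integrable (fun x => pairCombination (j₁ x) (j₂ x) K i) μ := by
  have h₁ := fun k => (hj₁.eval k).integrable one_le_two
  have h₂ := fun k => (hj₂.eval k).integrable one_le_two
  fin_cases i <;> exact ((h₁ _).const_mul _).add ((h₂ _).const_mul _)

end Integrability

section Average

variable {Ω : Set (Fin 2 → ℝ)}

theorem avg_add {f g : (Fin 2 → ℝ) → ℝ} (hf : Integrable f (volume.restrict Ω))
    (hg : Integrable g (volume.restrict Ω)) :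
    avg Ω (fun x => f x + g x) = avg Ω f + avg Ω g := by
  rw [avg, avg, avg, integral_add hf hg, mul_add]

theorem avg_sub {f g : (Fin 2 → ℝ) → ℝ} (hf : Integrable f (volume.restrict Ω))
    (hg : Integrable g (volume.restrict Ω)) :
    avg Ω (fun x => f x - g x) = avg Ω f - avg Ω g := by
  rw [avg, avg, avg, integral_sub hf hg, mul_sub]

theorem avg_const_mul (c : ℝ) (f : (Fin 2 → ℝ) → ℝ) :
    avg Ω (fun x => c * f x) = c * avg Ω f := by
  rw [avg, avg, integral_const_mul, mul_left_comm]

theorem avg_mul_const (f : (Fin 2 → ℝ) → ℝ) (c : ℝ) :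
    avg Ω (fun x => f x * c) = avg Ω f * c := by
  simpa only [mul_comm _ c] using avg_const_mul c f

theorem avg_neg (f : (Fin 2 → ℝ) → ℝ) : avg Ω (fun x => -f x) = -avg Ω f := by
  rw [avg, avg, integral_neg, mul_neg]

theorem avg_const (hΩ : (volume Ω).toReal ≠ 0) (c : ℝ) : avg Ω (fun _ => c) = c := by
  rw [avg, setIntegral_const, smul_eq_mul, measureReal_def, inv_mul_cancel_left₀ hΩ]

theorem avg_finsetSum {ι : Type*} (s : Finset ι) {f : ι → (Fin 2 → ℝ) → ℝ}
    (hf : ∀ i ∈ s, Integrable (f i) (volume.restrict Ω)) :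
    avg Ω (fun x => ∑ i ∈ s, f i x) = ∑ i ∈ s, avg Ω (f i) := by
  rw [avg, integral_finsetSum s hf, Finset.mul_sum]
  rfl

theorem avg_dotProduct {n : Type*} [Fintype n] {f : (Fin 2 → ℝ) → n → ℝ}
    (hf : ∀ i, Integrable (fun x => f x i) (volume.restrict Ω)) (w : n → ℝ) :
    avg Ω (fun x => w ⬝ᵥ f x) = w ⬝ᵥ fun i => avg Ω fun x => f x i := by
  simp only [dotProduct]
  rw [avg_finsetSum _ fun i _ => (hf i).const_mul (w i)]
  simp only [avg_const_mul]

theorem avg_dotProduct_mulVec {n : Type*} [Fintype n] {M : (Fin 2 → ℝ) → Matrix n n ℝ}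
    (hM : ∀ i j, Integrable (fun x => M x i j) (volume.restrict Ω)) (v w : n → ℝ) :
    avg Ω (fun x => v ⬝ᵥ M x *ᵥ w) = v ⬝ᵥ (of fun i j => avg Ω fun x => M x i j) *ᵥ w := by
  have hMw (i : n) : Integrable (fun x => (M x *ᵥ w) i) (volume.restrict Ω) :=
    integrable_finsetSum _ fun j _ => (hM i j).mul_const (w j)
  rw [avg_dotProduct hMw]
  congr 1
  ext i
  simp only [mulVec, dotProduct, of_apply]
  rw [avg_finsetSum _ fun j _ => (hM i j).mul_const (w j)]
  simp only [avg_mul_const]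

theorem avg_translatedTensor {A : (Fin 2 → ℝ) → Matrix (Fin 2) (Fin 2) ℝ}
    (t : (Fin 2 → ℝ) → ℝ) :
    (of fun i k => avg Ω fun x => translatedTensor (A x) (t x) i k) =
      translatedTensor (of fun i k => avg Ω fun x => A x i k) (avg Ω t) := by
  have h0 : avg Ω (fun _ => 0) = 0 := by simp [avg]
  ext i k
  fin_cases i <;> fin_cases k <;> simp [translatedTensor, h0, avg_neg]

theorem avg_pairCombination [IsFiniteMeasure (volume.restrict Ω)]
    {j₁ j₂ : (Fin 2 → ℝ) → Fin 2 → ℝ}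
    (hj₁ : MemLp j₁ 2 (volume.restrict Ω)) (hj₂ : MemLp j₂ 2 (volume.restrict Ω))
    (K : Fin 4 → ℝ) :
    (fun i => avg Ω fun x => pairCombination (j₁ x) (j₂ x) K i) =
      pairCombination (fun k => avg Ω fun x => j₁ x k) (fun k => avg Ω fun x => j₂ x k) K := by
  have h₁ := fun k => ((hj₁.eval k).integrable one_le_two).const_mul
  have h₂ := fun k => ((hj₂.eval k).integrable one_le_two).const_mul
  ext i
  fin_cases i <;> simp [pairCombination, avg_add (h₁ _ _) (h₂ _ _), avg_const_mul]

theorem avg_nonneg {f : (Fin 2 → ℝ) → ℝ} (hf : ∀ x, 0 ≤ f x) : 0 ≤ avg Ω f :=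
  mul_nonneg (inv_nonneg.mpr ENNReal.toReal_nonneg) (integral_nonneg hf)

theorem avg_pos {f : (Fin 2 → ℝ) → ℝ} (hΩ : 0 < (volume Ω).toReal) (hf : ∀ x, 0 ≤ f x)
    (hfi : Integrable f (volume.restrict Ω)) (hf0 : ¬ f =ᵐ[volume.restrict Ω] 0) :
    0 < avg Ω f := by
  refine mul_pos (inv_pos.mpr hΩ) (lt_of_le_of_ne (integral_nonneg hf) (Ne.symm fun h => hf0 ?_))
  exact (integral_eq_zero_iff_of_nonneg hf hfi).mp h

end Average

section Attainability

variable {Ω : Set (Fin 2 → ℝ)} [IsFiniteMeasure (volume.restrict Ω)] {σ : (Fin 2 → ℝ) → ℝ}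
  {σ₁ σ₂ : ℝ} {j₁ j₂ : (Fin 2 → ℝ) → Fin 2 → ℝ}

theorem integrable_attainabilityDefect (hσm : Measurable σ) (hσ₂ : 0 < σ₂)
    (hσ₂le : ∀ x, σ₂ ≤ σ x) (hσ₁ : 0 < σ₁) (hj₁ : MemLp j₁ 2 (volume.restrict Ω))
    (hj₂ : MemLp j₂ 2 (volume.restrict Ω)) (γ : ℝ) (K : Fin 4 → ℝ) :
    Integrable (fun x => attainabilityDefect (σ x)⁻¹ σ₁⁻¹ γ (j₁ x) (j₂ x) K)
      (volume.restrict Ω) := by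
  have hσ x : 0 < σ x := hσ₂.trans_le (hσ₂le x)
  have hst x : (σ x)⁻¹ + σ₁⁻¹ ≠ 0 := by have := hσ x; positivity
  simp only [fun x => attainabilityDefect_eq γ (j₁ x) (j₂ x) K (hst x)]
  refine ((Integrable.dotProduct_mulVec (integrable_translatedTensor_apply
    (integrable_inv_smul_pairGram_apply hσm hσ₂ hσ₂le hj₁ hj₂)
    ((hj₁.integrable_dotProduct (hj₂.mulVec Rperp)).const_mul _)) K K).sub ?_).add ?_
  · exact (Integrable.const_dotProduct (integrable_pairCombination_apply hj₁ hj₂ K) _).const_mul _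
  · exact ((Integrable.inv_add_inv hσm hσ hσ₁).const_mul _).mul_const _

theorem avg_attainabilityDefect (hσm : Measurable σ) (hσ₂ : 0 < σ₂) (hσ₂le : ∀ x, σ₂ ≤ σ x)
    (hσ₁ : 0 < σ₁) (hj₁ : MemLp j₁ 2 (volume.restrict Ω)) (hj₂ : MemLp j₂ 2 (volume.restrict Ω))
    (hj₁avg : (fun k => avg Ω fun x => j₁ x k) = ![1, 0])
    (hj₂avg : (fun k => avg Ω fun x => j₂ x k) = ![0, 1])
    {g : ℝ} (hg : 2 * avg Ω (fun x => ((σ x)⁻¹ + σ₁⁻¹)⁻¹) = g) (K : Fin 4 → ℝ) :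
    avg Ω (fun x => attainabilityDefect (σ x)⁻¹ σ₁⁻¹ g⁻¹ (j₁ x) (j₂ x) K) =
      K ⬝ᵥ (translatedTensor (of fun i k => avg Ω fun x => ((σ x)⁻¹ • pairGram (j₁ x) (j₂ x)) i k)
        (avg Ω fun x => σ₁⁻¹ * (j₁ x ⬝ᵥ Rperp *ᵥ j₂ x)) - g⁻¹ • blockIRperp) *ᵥ K := by
  have hσ x : 0 < σ x := hσ₂.trans_le (hσ₂le x)
  have hst x : (σ x)⁻¹ + σ₁⁻¹ ≠ 0 := by have := hσ x; positivity
  have hQ := integrable_translatedTensor_apply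
    (integrable_inv_smul_pairGram_apply hσm hσ₂ hσ₂le hj₁ hj₂)
    ((hj₁.integrable_dotProduct (hj₂.mulVec Rperp)).const_mul σ₁⁻¹)
  have hJ := integrable_pairCombination_apply hj₁ hj₂ K
  have hQK := Integrable.dotProduct_mulVec hQ K K
  have hBJ : Integrable (fun x => 2 * g⁻¹ * (blockIRperp *ᵥ K ⬝ᵥ pairCombination (j₁ x) (j₂ x) K))
      (volume.restrict Ω) := (Integrable.const_dotProduct hJ _).const_mul _
  have hQBJ : Integrable (fun x => K ⬝ᵥ translatedTensor ((σ x)⁻¹ • pairGram (j₁ x) (j₂ x))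
      (σ₁⁻¹ * (j₁ x ⬝ᵥ Rperp *ᵥ j₂ x)) *ᵥ K -
      2 * g⁻¹ * (blockIRperp *ᵥ K ⬝ᵥ pairCombination (j₁ x) (j₂ x) K)) (volume.restrict Ω) :=
    hQK.sub hBJ
  simp only [fun x => attainabilityDefect_eq g⁻¹ (j₁ x) (j₂ x) K (hst x)]
  rw [avg_add hQBJ (((Integrable.inv_add_inv hσm hσ hσ₁).const_mul _).mul_const _),
    avg_sub hQK hBJ, avg_dotProduct_mulVec hQ, avg_translatedTensor, avg_const_mul (2 * g⁻¹),
    avg_dotProduct hJ, avg_pairCombination hj₁ hj₂, hj₁avg, hj₂avg, pairCombination_basis,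
    avg_mul_const, avg_const_mul (2 * g⁻¹ ^ 2),
    show avg Ω (fun x => ((σ x)⁻¹ + σ₁⁻¹)⁻¹) = g / 2 by linarith,
    sub_mulVec, dotProduct_sub, smul_mulVec, dotProduct_smul, dotProduct_comm _ K, smul_eq_mul]
  rcases eq_or_ne g 0 with rfl | hg0
  · simp
  · field_simp
    ring

theorem translatedTensor_sub_pos_of_not_ae_eq (hΩ : 0 < (volume Ω).toReal) (hσm : Measurable σ)
    (hσ₂ : 0 < σ₂) (hσ₂le : ∀ x, σ₂ ≤ σ x) (hσle : ∀ x, σ x ≤ σ₁)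
    (hj₁ : MemLp j₁ 2 (volume.restrict Ω)) (hj₂ : MemLp j₂ 2 (volume.restrict Ω))
    (hj₁avg : (fun k => avg Ω fun x => j₁ x k) = ![1, 0])
    (hj₂avg : (fun k => avg Ω fun x => j₂ x k) = ![0, 1])
    {g : ℝ} (hg : 2 * avg Ω (fun x => ((σ x)⁻¹ + σ₁⁻¹)⁻¹) = g) (K : Fin 4 → ℝ)
    (hK : ¬ ∀ᵐ x ∂(volume.restrict Ω),
      translatedTensor ((σ x)⁻¹ • 1) σ₁⁻¹ *ᵥ pairCombination (j₁ x) (j₂ x) K =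
        (g⁻¹ • blockIRperp) *ᵥ fun i => avg Ω fun y => pairCombination (j₁ y) (j₂ y) K i) :
    0 < K ⬝ᵥ (translatedTensor (of fun i k => avg Ω fun x => ((σ x)⁻¹ • pairGram (j₁ x) (j₂ x)) i k)
      (avg Ω fun x => σ₁⁻¹ * (j₁ x ⬝ᵥ Rperp *ᵥ j₂ x)) - g⁻¹ • blockIRperp) *ᵥ K := by
  have hσ x : 0 < σ x := hσ₂.trans_le (hσ₂le x)
  have hσ₁ : 0 < σ₁ := (hσ 0).trans_le (hσle 0)
  have hts x : σ₁⁻¹ ≤ (σ x)⁻¹ := inv_anti₀ (hσ x) (hσle x)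
  rw [← avg_attainabilityDefect hσm hσ₂ hσ₂le hσ₁ hj₁ hj₂ hj₁avg hj₂avg hg]
  refine avg_pos hΩ (fun x => attainabilityDefect_nonneg (inv_pos.mpr hσ₁).le (hts x))
    (integrable_attainabilityDefect hσm hσ₂ hσ₂le hσ₁ hj₁ hj₂ _ K) fun h0 => hK ?_
  filter_upwards [h0] with x hx
  rw [avg_pairCombination hj₁ hj₂, hj₁avg, hj₂avg, pairCombination_basis, smul_mulVec]
  exact translatedTensor_mulVec_of_attainabilityDefect_eq_zero (inv_pos.mpr hσ₁) (hts x) hx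

end Attainability

theorem inv_add_inv_two_phase {σ₁ σ₂ χ : ℝ} (hσ₁ : 0 < σ₁) (hσ₂ : 0 < σ₂) (hχ : χ = 0 ∨ χ = 1) :
    ((σ₁ * χ + σ₂ * (1 - χ))⁻¹ + σ₁⁻¹)⁻¹ =
      σ₁ * (σ₁ - σ₂) / (2 * (σ₁ + σ₂)) * χ + σ₁ * σ₂ / (σ₁ + σ₂) := by
  rcases hχ with rfl | rfl <;> field_simp <;> ring

theorem two_mul_avg_inv_add_inv {Ω : Set (Fin 2 → ℝ)} [IsFiniteMeasure (volume.restrict Ω)]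
    (hΩ : 0 < (volume Ω).toReal)
    {χ₁ : (Fin 2 → ℝ) → ℝ} (hχm : Measurable χ₁) (hχ01 : ∀ x, χ₁ x = 0 ∨ χ₁ x = 1)
    {σ₁ σ₂ : ℝ} (hσ₁ : 0 < σ₁) (hσ₂ : 0 < σ₂) :
    2 * avg Ω (fun x => ((σ₁ * χ₁ x + σ₂ * (1 - χ₁ x))⁻¹ + σ₁⁻¹)⁻¹) =
      avg Ω χ₁ * σ₁ * (σ₁ - σ₂) / (σ₁ + σ₂) + 2 * σ₁ * σ₂ / (σ₁ + σ₂) := by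
  have hχi : Integrable χ₁ (volume.restrict Ω) :=
    .of_bound hχm.aestronglyMeasurable 1 <| .of_forall fun x => by
      rcases hχ01 x with h | h <;> simp [h]
  simp only [inv_add_inv_two_phase hσ₁ hσ₂ (hχ01 _)]
  rw [avg_add (hχi.const_mul _) (integrable_const _), avg_const_mul, avg_const hΩ.ne']
  field_simp

theorem two_phase_bound_pos {f σ₁ σ₂ : ℝ} (hσ₂ : 0 < σ₂) (hσ : σ₂ < σ₁) (hf : 0 ≤ f) :
    0 < f * σ₁ * (σ₁ - σ₂) / (σ₁ + σ₂) + 2 * σ₁ * σ₂ / (σ₁ + σ₂) := by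
  have := hσ₂.trans hσ
  have := sub_pos.mpr hσ
  positivity

theorem lt_of_lt_two_phase_bound {f σ₁ σ₂ r : ℝ} (hσ₂ : 0 < σ₂) (hσ : σ₂ < σ₁)
    (hr : r < f * σ₁ * (σ₁ - σ₂) / (σ₁ + σ₂) + 2 * σ₁ * σ₂ / (σ₁ + σ₂)) :
    (σ₁ + σ₂) / (σ₁ * (σ₁ - σ₂)) * (r - 2 * σ₁ * σ₂ / (σ₁ + σ₂)) < f := by
  have hσ₁ : 0 < σ₁ := hσ₂.trans hσ
  have hd : 0 < σ₁ - σ₂ := sub_pos.mpr hσ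
  calc (σ₁ + σ₂) / (σ₁ * (σ₁ - σ₂)) * (r - 2 * σ₁ * σ₂ / (σ₁ + σ₂))
      < (σ₁ + σ₂) / (σ₁ * (σ₁ - σ₂)) * (f * σ₁ * (σ₁ - σ₂) / (σ₁ + σ₂)) := by
        gcongr
        linarith
    _ = f := by field_simp

theorem lower_bound_not_attained_general
    (Ω : Set (Fin 2 → ℝ))
    (hΩpos : 0 < (volume Ω).toReal)
    (χ₁ : (Fin 2 → ℝ) → ℝ) (hχmeas : Measurable χ₁)
    (hχ01 : ∀ x, χ₁ x = 0 ∨ χ₁ x = 1)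
    (σ₁ σ₂ : ℝ) (hσ₂ : 0 < σ₂) (hσ : σ₂ < σ₁)
    (σ : (Fin 2 → ℝ) → ℝ)
    (hσdef : ∀ x, σ x = σ₁ * χ₁ x + σ₂ * (1 - χ₁ x))
    (f₁ : ℝ) (hf₁ : f₁ = avg Ω χ₁)
    (j₁ j₂ : (Fin 2 → ℝ) → (Fin 2 → ℝ))
    (hj₁ : MemLp j₁ 2 (volume.restrict Ω))
    (hj₂ : MemLp j₂ 2 (volume.restrict Ω))
    -- normalization `⟨j₁⟩ = (1,0)ᵀ`, `⟨j₂⟩ = (0,1)ᵀ`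
    (hj₁avg : avg Ω (fun x => j₁ x 0) = 1 ∧ avg Ω (fun x => j₁ x 1) = 0)
    (hj₂avg : avg Ω (fun x => j₂ x 0) = 0 ∧ avg Ω (fun x => j₂ x 1) = 1)
    (A : Matrix (Fin 2) (Fin 2) ℝ)
    (hA11 : A 0 0 = avg Ω (fun x => (σ x)⁻¹ * (j₁ x ⬝ᵥ j₁ x)))
    (hA12 : A 0 1 = avg Ω (fun x => (σ x)⁻¹ * (j₁ x ⬝ᵥ j₂ x)))
    (hA21 : A 1 0 = avg Ω (fun x => (σ x)⁻¹ * (j₂ x ⬝ᵥ j₁ x)))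
    (hA22 : A 1 1 = avg Ω (fun x => (σ x)⁻¹ * (j₂ x ⬝ᵥ j₂ x)))
    (b : ℝ) (hb : b = avg Ω (fun x => j₁ x ⬝ᵥ Rperp.mulVec (j₂ x)))
    -- `L x` is the translated tensor at `c = 1/σ₁`
    (L : (Fin 2 → ℝ) → Matrix (Fin 4) (Fin 4) ℝ)
    (hL : ∀ x, L x = !![(σ x)⁻¹, 0, 0, σ₁⁻¹;
                        0, (σ x)⁻¹, -σ₁⁻¹, 0;
                        0, -σ₁⁻¹, (σ x)⁻¹, 0;
                        σ₁⁻¹, 0, 0, (σ x)⁻¹])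
    (g : ℝ) (hg : g = f₁ * σ₁ * (σ₁ - σ₂) / (σ₁ + σ₂) + 2 * σ₁ * σ₂ / (σ₁ + σ₂))
    (Minf : Matrix (Fin 4) (Fin 4) ℝ) (hMinf : Minf = g⁻¹ • blockIRperp)
    -- `J_K = (k₁j₁ + k₂j₂, k₃j₁ + k₄j₂)`
    (JK : (Fin 4 → ℝ) → (Fin 2 → ℝ) → (Fin 4 → ℝ))
    (hJK : ∀ K x, JK K x = ![K 0 * j₁ x 0 + K 1 * j₂ x 0,
                             K 0 * j₁ x 1 + K 1 * j₂ x 1,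
                             K 2 * j₁ x 0 + K 3 * j₂ x 0,
                             K 2 * j₁ x 1 + K 3 * j₂ x 1])
    -- for every unit `K`, the attainability field is not a.e. zero
    (hnot : ∀ K : Fin 4 → ℝ, K 0 ^ 2 + K 1 ^ 2 + K 2 ^ 2 + K 3 ^ 2 = 1 →
      ¬ (∀ᵐ x ∂(volume.restrict Ω),
          (L x).mulVec (JK K x) =
            Minf.mulVec (fun i => avg Ω (fun y => JK K y i)))) :
    0 < A.det - b ^ 2 / σ₁ ^ 2 ∧
    f₁ > (σ₁ + σ₂) / (σ₁ * (σ₁ - σ₂)) *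
      ((A.trace - 2 * b / σ₁) / (A.det - b ^ 2 / σ₁ ^ 2) -
        2 * σ₁ * σ₂ / (σ₁ + σ₂)) := by
  obtain rfl : L = fun x => translatedTensor ((σ x)⁻¹ • 1) σ₁⁻¹ :=
    funext fun x => (hL x).trans (translatedTensor_smul_one _ _).symm
  obtain rfl : JK = fun K x => pairCombination (j₁ x) (j₂ x) K := funext₂ hJK
  subst hMinf
  have : IsFiniteMeasure (volume.restrict Ω) :=
    isFiniteMeasure_restrict.mpr (ENNReal.toReal_pos_iff.mp hΩpos).2.ne
  have hσm : Measurable σ := by rw [funext hσdef]; fun_prop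
  have hσb : ∀ x, σ₂ ≤ σ x ∧ σ x ≤ σ₁ := fun x => by
    rcases hχ01 x with h | h <;> simp [hσdef, h, hσ.le]
  have hgavg : 2 * avg Ω (fun x => ((σ x)⁻¹ + σ₁⁻¹)⁻¹) = g := by
    simp only [hσdef, hg, hf₁]
    exact two_mul_avg_inv_add_inv hΩpos hχmeas hχ01 (hσ₂.trans hσ) hσ₂
  have hgpos : 0 < g := hg ▸ two_phase_bound_pos hσ₂ hσ
    (hf₁ ▸ avg_nonneg fun x => by rcases hχ01 x with h | h <;> simp [h])
  have hA : A = of fun i k => avg Ω fun x => ((σ x)⁻¹ • pairGram (j₁ x) (j₂ x)) i k := by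
    ext i k
    fin_cases i <;> fin_cases k
    exacts [hA11, hA12, hA21, hA22]
  have hpos := pos_of_pos_on_unit_sphere
    (M := translatedTensor A (b / σ₁) - g⁻¹ • blockIRperp) fun K hK => by
      rw [hA, hb, div_eq_inv_mul, ← avg_const_mul]
      refine translatedTensor_sub_pos_of_not_ae_eq hΩpos hσm hσ₂ (fun x => (hσb x).1)
        (fun x => (hσb x).2) hj₁ hj₂ ?_ ?_ hgavg K (hnot K ?_)
      · ext k; fin_cases k; exacts [hj₁avg.1, hj₁avg.2]
      · ext k; fin_cases k; exacts [hj₂avg.1, hj₂avg.2]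
      · simpa [dotProduct, Fin.sum_univ_four, sq] using hK
  have hA10 : A 1 0 = A 0 1 := by rw [hA21, hA12]; simp_rw [dotProduct_comm]
  obtain ⟨hD, hT⟩ := translation_bound_of_pos hA10 (inv_pos.mpr hgpos) hpos
  rw [div_pow] at hD
  refine ⟨hD, lt_of_lt_two_phase_bound hσ₂ hσ ?_⟩
  rw [← hg, ← div_pow, mul_div_assoc]
  rwa [inv_inv] at hT

/-- If for every unit vector `K` the field `L J_K - M_∞⟨J_K⟩` is not a.e. zero, then the
translation lower bound on the volume fraction is not attained (strict inequality holds);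
see (3.1)–(3.3) of the paper. -/
theorem lower_bound_not_attained
    (Ω : Set (Fin 2 → ℝ)) (hΩmeas : MeasurableSet Ω)
    (hΩbdd : Bornology.IsBounded Ω) (hΩpos : 0 < (volume Ω).toReal)
    (χ₁ : (Fin 2 → ℝ) → ℝ) (hχmeas : Measurable χ₁)
    (hχ01 : ∀ x, χ₁ x = 0 ∨ χ₁ x = 1)
    (σ₁ σ₂ : ℝ) (hσ₂ : 0 < σ₂) (hσ : σ₂ < σ₁)
    (σ : (Fin 2 → ℝ) → ℝ)
    (hσdef : ∀ x, σ x = σ₁ * χ₁ x + σ₂ * (1 - χ₁ x))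
    (f₁ : ℝ) (hf₁ : f₁ = avg Ω χ₁)
    (j₁ j₂ : (Fin 2 → ℝ) → (Fin 2 → ℝ))
    (hj₁ : MemLp j₁ 2 (volume.restrict Ω))
    (hj₂ : MemLp j₂ 2 (volume.restrict Ω))
    -- normalization `⟨j₁⟩ = (1,0)ᵀ`, `⟨j₂⟩ = (0,1)ᵀ`
    (hj₁avg : avg Ω (fun x => j₁ x 0) = 1 ∧ avg Ω (fun x => j₁ x 1) = 0)
    (hj₂avg : avg Ω (fun x => j₂ x 0) = 0 ∧ avg Ω (fun x => j₂ x 1) = 1)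
    (A : Matrix (Fin 2) (Fin 2) ℝ)
    (hA11 : A 0 0 = avg Ω (fun x => (σ x)⁻¹ * (j₁ x ⬝ᵥ j₁ x)))
    (hA12 : A 0 1 = avg Ω (fun x => (σ x)⁻¹ * (j₁ x ⬝ᵥ j₂ x)))
    (hA21 : A 1 0 = avg Ω (fun x => (σ x)⁻¹ * (j₂ x ⬝ᵥ j₁ x)))
    (hA22 : A 1 1 = avg Ω (fun x => (σ x)⁻¹ * (j₂ x ⬝ᵥ j₂ x)))
    (b : ℝ) (hb : b = avg Ω (fun x => j₁ x ⬝ᵥ Rperp.mulVec (j₂ x)))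
    -- `L x` is the translated tensor at `c = 1/σ₁`
    (L : (Fin 2 → ℝ) → Matrix (Fin 4) (Fin 4) ℝ)
    (hL : ∀ x, L x = !![(σ x)⁻¹, 0, 0, σ₁⁻¹;
                        0, (σ x)⁻¹, -σ₁⁻¹, 0;
                        0, -σ₁⁻¹, (σ x)⁻¹, 0;
                        σ₁⁻¹, 0, 0, (σ x)⁻¹])
    (g : ℝ) (hg : g = f₁ * σ₁ * (σ₁ - σ₂) / (σ₁ + σ₂) + 2 * σ₁ * σ₂ / (σ₁ + σ₂))
    (Minf : Matrix (Fin 4) (Fin 4) ℝ) (hMinf : Minf = g⁻¹ • blockIRperp)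
    -- `J_K = (k₁j₁ + k₂j₂, k₃j₁ + k₄j₂)`
    (JK : (Fin 4 → ℝ) → (Fin 2 → ℝ) → (Fin 4 → ℝ))
    (hJK : ∀ K x, JK K x = ![K 0 * j₁ x 0 + K 1 * j₂ x 0,
                             K 0 * j₁ x 1 + K 1 * j₂ x 1,
                             K 2 * j₁ x 0 + K 3 * j₂ x 0,
                             K 2 * j₁ x 1 + K 3 * j₂ x 1])
    -- for every unit `K`, the attainability field is not a.e. zero
    (hnot : ∀ K : Fin 4 → ℝ, K 0 ^ 2 + K 1 ^ 2 + K 2 ^ 2 + K 3 ^ 2 = 1 →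
      ¬ (∀ᵐ x ∂(volume.restrict Ω),
          (L x).mulVec (JK K x) =
            Minf.mulVec (fun i => avg Ω (fun y => JK K y i)))) :
    0 < A.det - b ^ 2 / σ₁ ^ 2 ∧
    f₁ > (σ₁ + σ₂) / (σ₁ * (σ₁ - σ₂)) *
      ((A.trace - 2 * b / σ₁) / (A.det - b ^ 2 / σ₁ ^ 2) -
        2 * σ₁ * σ₂ / (σ₁ + σ₂)) :=
  lower_bound_not_attained_general Ω hΩpos χ₁ hχmeas hχ01 σ₁ σ₂ hσ₂ hσ σ hσdef f₁ hf₁ j₁ j₂ hj₁ hj₂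
    hj₁avg hj₂avg A hA11 hA12 hA21 hA22 b hb L hL g hg Minf hMinf JK hJK hnot
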